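/- Let n ≥ 1. The symmetric canonical elements for the integer lattice ℤ^n of SO(2n+1) are precisely the elements ξ_I = Σ_{i∈I}H_i over subsets I ⊆ {1,…,n}, and H_n = E_1+⋯+E_n is the unique symmetric canonical element ξ all of whose coordinates are odd, equivalently with m_ξ^- = 1 and min(m_ξ^+, m_ξ^-) = 1 (so H_n is the unique symmetric canonical element whose associated inner symmetric space is the real projective space ℝP^{2n} = G^ℝ_1(2n+1)). Moreover 2a_1(H_n) = 2, i.e., its uniton number for the standard representation is 2. -/
import Mathlib


open scoped Classical

/-- `H_i = E_1 + ⋯ + E_i` for `so(2n+1)` (1-based index `i`). -/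
def Hspin (n i : ℕ) : Fin n → ℝ := fun j => if (j : ℕ) + 1 ≤ i then 1 else 0

/-- The integer lattice `ℤ^n` inside `ℝ^n` (the integer lattice of `SO(2n+1)`). -/
def IntLat (n : ℕ) : Set (Fin n → ℝ) := {v | ∀ j, ∃ m : ℤ, v j = m}

/-- The set of symmetric canonical elements for a lattice `𝔏 ⊆ ℝ^n`. -/
def SymCanonSet (n : ℕ) (𝔏 : Set (Fin n → ℝ)) (H : ℕ → Fin n → ℝ) :
    Set (Fin n → ℝ) :=
  {ξ | ∃ c : ℕ → ℕ, ξ = ∑ i ∈ Finset.Icc 1 n, c i • H i ∧ ξ ∈ 𝔏 ∧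
    ∀ c' : ℕ → ℕ, (∀ i ∈ Finset.Icc 1 n, c' i ≤ c i) →
      (∑ i ∈ Finset.Icc 1 n, c' i • H i) ∈ 𝔏 →
      (ξ - ∑ i ∈ Finset.Icc 1 n, c' i • H i) ∈ (fun v => (2 : ℝ) • v) '' 𝔏 →
      (∑ i ∈ Finset.Icc 1 n, c' i • H i) = ξ}

/-- Sum of the first `k` (1-based) coordinates of `v`. -/
def partialSum (n : ℕ) (v : Fin n → ℝ) (k : ℕ) : ℝ :=
  ∑ j ∈ Finset.univ.filter (fun j : Fin n => (j : ℕ) + 1 ≤ k), v j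

/-- Number of coordinates of `v` equal to an odd integer. -/
noncomputable def nOdd (n : ℕ) (v : Fin n → ℝ) : ℕ :=
  (Finset.univ.filter fun j : Fin n => ∃ m : ℤ, Odd m ∧ v j = m).card

/-- Number of coordinates of `v` equal to an even integer. -/
noncomputable def nEven (n : ℕ) (v : Fin n → ℝ) : ℕ :=
  (Finset.univ.filter fun j : Fin n => ∃ m : ℤ, Even m ∧ v j = m).card

lemma hspin_mem (n i : ℕ) : Hspin n i ∈ IntLat n := by
  intro j
  refine ⟨if (j : ℕ) + 1 ≤ i then 1 else 0, ?_⟩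
  simp only [Hspin]
  split <;> simp

lemma coord (n : ℕ) (c : ℕ → ℕ) (j : Fin n) :
    (∑ i ∈ Finset.Icc 1 n, c i • Hspin n i) j
      = ((∑ i ∈ Finset.Icc ((j : ℕ) + 1) n, c i : ℕ) : ℝ) := by
  rw [Finset.sum_apply]
  have h1 : ∀ i ∈ Finset.Icc 1 n, (c i • Hspin n i) j
      = if (j : ℕ) + 1 ≤ i then (c i : ℝ) else 0 := by
    intro i _
    simp only [Pi.smul_apply, Hspin, smul_eq_mul, nsmul_eq_mul]
    split <;> simp
  rw [Finset.sum_congr rfl h1, ← Finset.sum_filter]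
  have h2 : (Finset.Icc 1 n).filter (fun i => (j : ℕ) + 1 ≤ i)
      = Finset.Icc ((j : ℕ) + 1) n := by
    ext i
    simp only [Finset.mem_filter, Finset.mem_Icc]
    omega
  rw [h2]
  push_cast
  rfl

lemma coordI (n : ℕ) (I : Finset ℕ) (j : Fin n) :
    (∑ i ∈ I, Hspin n i) j = ((I.filter fun i => (j : ℕ) + 1 ≤ i).card : ℝ) := by
  rw [Finset.sum_apply]
  have h1 : ∀ i ∈ I, Hspin n i j = if (j : ℕ) + 1 ≤ i then (1 : ℝ) else 0 := fun i _ => rfl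
  rw [Finset.sum_congr rfl h1, ← Finset.sum_filter, Finset.sum_const, nsmul_eq_mul, mul_one]

lemma sum_mem_intlat (n : ℕ) (c : ℕ → ℕ) :
    (∑ i ∈ Finset.Icc 1 n, c i • Hspin n i) ∈ IntLat n := by
  intro j
  exact ⟨(∑ i ∈ Finset.Icc ((j : ℕ) + 1) n, c i : ℕ), by rw [coord]; push_cast; rfl⟩

lemma sum_Icc_split (n i : ℕ) (f : ℕ → ℕ) (h : i ≤ n) :
    ∑ k ∈ Finset.Icc i n, f k = f i + ∑ k ∈ Finset.Icc (i + 1) n, f k := by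
  have : Finset.Icc i n = insert i (Finset.Icc (i + 1) n) := by
    ext k; simp only [Finset.mem_insert, Finset.mem_Icc]; omega
  rw [this, Finset.sum_insert (by simp [Finset.mem_Icc])]

-- Direction 1: canonical elements have 0/1 coefficients
lemma canon_sub (n : ℕ) (ξ : Fin n → ℝ) (hξ : ξ ∈ SymCanonSet n (IntLat n) (Hspin n)) :
    ∃ I : Finset ℕ, I ⊆ Finset.Icc 1 n ∧ ξ = ∑ i ∈ I, Hspin n i := by
  obtain ⟨c, hξc, hmem, hmin⟩ := hξ
  have hle : ∀ i ∈ Finset.Icc 1 n, c i ≤ 1 := by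
    intro i hi
    by_contra hgt
    push_neg at hgt
    have hi2 : 2 ≤ c i := hgt
    obtain ⟨hi1, hin⟩ := Finset.mem_Icc.mp hi
    set c' : ℕ → ℕ := Function.update c i (c i - 2) with hc'
    -- key sum comparison
    have hkey : ∀ j : Fin n, ∑ k ∈ Finset.Icc ((j : ℕ) + 1) n, c k
        = (∑ k ∈ Finset.Icc ((j : ℕ) + 1) n, c' k) + (if (j : ℕ) + 1 ≤ i then 2 else 0) := by
      intro j
      by_cases h : (j : ℕ) + 1 ≤ i
      · have hmemI : i ∈ Finset.Icc ((j : ℕ) + 1) n := Finset.mem_Icc.mpr ⟨h, hin⟩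
        rw [if_pos h, hc', Finset.sum_update_of_mem hmemI, Finset.sdiff_singleton_eq_erase,
          ← Finset.add_sum_erase _ c hmemI]
        omega
      · rw [if_neg h, add_zero]
        refine (Finset.sum_congr rfl fun k hk => ?_).symm
        have hne : k ≠ i := by
          rcases Finset.mem_Icc.mp hk with ⟨h1, _⟩
          omega
        simp [hc', Function.update_of_ne hne]
    have h1 : ∀ k ∈ Finset.Icc 1 n, c' k ≤ c k := by
      intro k _
      by_cases hk : k = i
      · subst hk; simp [hc']
      · simp [hc', Function.update_of_ne hk]
    have h3 : (ξ - ∑ k ∈ Finset.Icc 1 n, c' k • Hspin n k)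
        ∈ (fun v => (2 : ℝ) • v) '' IntLat n := by
      refine ⟨Hspin n i, hspin_mem n i, ?_⟩
      funext j
      simp only [Pi.sub_apply, Pi.smul_apply, smul_eq_mul]
      rw [hξc, coord, coord, hkey j, Hspin]
      push_cast
      split <;> ring
    have heq := hmin c' h1 (sum_mem_intlat n c') h3
    -- contradiction at coordinate i-1
    have hj : i - 1 < n := by omega
    set j : Fin n := ⟨i - 1, hj⟩ with hjdef
    have hji : (j : ℕ) + 1 = i := by simp [hjdef]; omega
    have := congrFun heq j
    rw [coord, hξc, coord] at this
    have hnat : (∑ k ∈ Finset.Icc ((j : ℕ) + 1) n, c' k)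
        = ∑ k ∈ Finset.Icc ((j : ℕ) + 1) n, c k := by exact_mod_cast this
    have := hkey j
    rw [if_pos (by omega : (j : ℕ) + 1 ≤ i)] at this
    omega
  refine ⟨(Finset.Icc 1 n).filter (fun i => c i = 1), Finset.filter_subset _ _, ?_⟩
  rw [hξc, Finset.sum_filter]
  refine Finset.sum_congr rfl fun i hi => ?_
  have := hle i hi
  interval_cases h : c i <;> simp [h]

-- Direction 2
lemma canon_sup (n : ℕ) (I : Finset ℕ) (hI : I ⊆ Finset.Icc 1 n) :
    (∑ i ∈ I, Hspin n i) ∈ SymCanonSet n (IntLat n) (Hspin n) := by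
  classical
  set c : ℕ → ℕ := fun i => if i ∈ I then 1 else 0 with hc
  have hrep : ∑ i ∈ I, Hspin n i = ∑ i ∈ Finset.Icc 1 n, c i • Hspin n i := by
    rw [show (∑ i ∈ Finset.Icc 1 n, c i • Hspin n i)
        = ∑ i ∈ Finset.Icc 1 n, if i ∈ I then Hspin n i else 0 from
      Finset.sum_congr rfl fun i _ => by by_cases h : i ∈ I <;> simp [hc, h]]
    rw [← Finset.sum_filter, Finset.filter_mem_eq_inter, Finset.inter_eq_right.mpr hI]
  refine ⟨c, hrep, by rw [hrep]; exact sum_mem_intlat n c, ?_⟩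
  intro c' h1 _ h3
  obtain ⟨v, hv, h2v⟩ := h3
  -- nat tail sums
  set S : ℕ → ℕ := fun k => ∑ i ∈ Finset.Icc (k + 1) n, c i with hS
  set S' : ℕ → ℕ := fun k => ∑ i ∈ Finset.Icc (k + 1) n, c' i with hS'
  have hSle : ∀ k, S' k ≤ S k := by
    intro k
    refine Finset.sum_le_sum fun i hi => h1 i ?_
    rcases Finset.mem_Icc.mp hi with ⟨ha, hb⟩
    exact Finset.mem_Icc.mpr ⟨by omega, hb⟩
  have hEeven : ∀ k, k ≤ n → Even (S k - S' k) := by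
    intro k hk
    rcases Nat.lt_or_ge k n with hlt | hge
    · set j : Fin n := ⟨k, hlt⟩ with hj
      obtain ⟨m, hm⟩ := hv j
      have := congrFun h2v j
      simp only [Pi.sub_apply, Pi.smul_apply, smul_eq_mul] at this
      rw [hrep, coord, coord, hm] at this
      have hcast : ((S k - S' k : ℕ) : ℝ) = 2 * m := by
        rw [Nat.cast_sub (hSle k)]
        simpa [hS, hS', hj] using this.symm
      have hz : ((S k - S' k : ℕ) : ℤ) = 2 * m := by exact_mod_cast hcast
      exact ⟨m.toNat, by omega⟩
    · have hk' : k = n := le_antisymm hk hge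
      have he : Finset.Icc (n + 1) n = ∅ := Finset.Icc_eq_empty (by omega)
      simp [hS, hS', hk', he]
  have hcc : ∀ i ∈ Finset.Icc 1 n, c' i = c i := by
    intro i hi
    obtain ⟨hi1, hin⟩ := Finset.mem_Icc.mp hi
    have hstep : S (i - 1) = c i + S i := by
      have : (i - 1) + 1 = i := by omega
      simp only [hS, this]
      exact sum_Icc_split n i c hin
    have hstep' : S' (i - 1) = c' i + S' i := by
      have : (i - 1) + 1 = i := by omega
      simp only [hS', this]
      exact sum_Icc_split n i c' hin
    obtain ⟨a, ha⟩ := hEeven (i - 1) (by omega)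
    obtain ⟨b, hb⟩ := hEeven i hin
    have hci : c i ≤ 1 := by by_cases h : i ∈ I <;> simp [hc, h]
    have hci' := h1 i hi
    have := hSle i
    have := hSle (i - 1)
    omega
  rw [hrep]
  exact Finset.sum_congr rfl fun i hi => by rw [hcc i hi]

lemma hspin_top (n : ℕ) (j : Fin n) : Hspin n n j = 1 := by
  simp [Hspin, j.isLt, Nat.succ_le_of_lt]

-- all-coordinates-odd implies ξ = H_n
lemma odd_unique (n : ℕ) (hn : 1 ≤ n) (I : Finset ℕ) (hI : I ⊆ Finset.Icc 1 n)
    (hodd : ∀ j : Fin n, ∃ m : ℤ, Odd m ∧ (∑ i ∈ I, Hspin n i) j = m) :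
    (∑ i ∈ I, Hspin n i) = Hspin n n := by
  set N : ℕ → ℕ := fun k => (I.filter fun i => k + 1 ≤ i).card with hN
  have hNodd : ∀ k, k < n → Odd (N k) := by
    intro k hk
    obtain ⟨m, hm, hmeq⟩ := hodd ⟨k, hk⟩
    rw [coordI] at hmeq
    have : (N k : ℤ) = m := by exact_mod_cast hmeq
    rw [← this] at hm
    exact_mod_cast hm
  have hNmono : ∀ k, N (k + 1) ≤ N k := by
    intro k
    apply Finset.card_le_card
    intro i hi
    rcases Finset.mem_filter.mp hi with ⟨h1, h2⟩
    exact Finset.mem_filter.mpr ⟨h1, by omega⟩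
  have hNstep : ∀ k, N k ≤ N (k + 1) + 1 := by
    intro k
    have hsub : I.filter (fun i => k + 1 ≤ i)
        ⊆ insert (k + 1) (I.filter fun i => k + 1 + 1 ≤ i) := by
      intro i hi
      rcases Finset.mem_filter.mp hi with ⟨h1, h2⟩
      rcases eq_or_lt_of_le h2 with h | h
      · exact Finset.mem_insert.mpr (Or.inl h.symm)
      · exact Finset.mem_insert.mpr (Or.inr (Finset.mem_filter.mpr ⟨h1, h⟩))
    calc N k ≤ (insert (k + 1) (I.filter fun i => k + 1 + 1 ≤ i)).card :=
          Finset.card_le_card hsub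
      _ ≤ N (k + 1) + 1 := Finset.card_insert_le _ _
  have hNbound : ∀ k, N k ≤ n - k := by
    intro k
    have hsub : I.filter (fun i => k + 1 ≤ i) ⊆ Finset.Icc (k + 1) n := by
      intro i hi
      rcases Finset.mem_filter.mp hi with ⟨h1, h2⟩
      exact Finset.mem_Icc.mpr ⟨h2, (Finset.mem_Icc.mp (hI h1)).2⟩
    calc N k ≤ (Finset.Icc (k + 1) n).card := Finset.card_le_card hsub
      _ = n - k := by rw [Nat.card_Icc]; omega
  have key : ∀ d, d ≤ n - 1 → N (n - 1 - d) = 1 := by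
    intro d
    induction d with
    | zero =>
      intro _
      simp only [Nat.sub_zero]
      obtain ⟨r, hr⟩ := hNodd (n - 1) (by omega)
      have := hNbound (n - 1)
      omega
    | succ d ih =>
      intro hd
      have hprev := ih (by omega)
      have hidx : n - 1 - (d + 1) + 1 = n - 1 - d := by omega
      have h1 := hNmono (n - 1 - (d + 1))
      have h2 := hNstep (n - 1 - (d + 1))
      rw [hidx] at h1 h2
      obtain ⟨r, hr⟩ := hNodd (n - 1 - (d + 1)) (by omega)
      omega
  funext j
  have hj : N j = 1 := by
    have := key (n - 1 - (j : ℕ)) (by omega)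
    rwa [show n - 1 - (n - 1 - (j : ℕ)) = (j : ℕ) by omega] at this
  rw [coordI, hspin_top]
  rw [show (I.filter fun i => (j : ℕ) + 1 ≤ i).card = N (j : ℕ) from rfl, hj]
  norm_num

lemma nOdd_top (n : ℕ) : nOdd n (Hspin n n) = n := by
  have : (Finset.univ.filter fun j : Fin n => ∃ m : ℤ, Odd m ∧ Hspin n n j = m)
      = Finset.univ := by
    refine Finset.filter_true_of_mem fun j _ => ⟨1, odd_one, by rw [hspin_top]; norm_num⟩
  rw [nOdd, this, Finset.card_univ, Fintype.card_fin]

lemma nEven_top (n : ℕ) : nEven n (Hspin n n) = 0 := by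
  rw [nEven, Finset.card_eq_zero, Finset.filter_eq_empty_iff]
  rintro j - ⟨m, hm, hmeq⟩
  rw [hspin_top] at hmeq
  have : m = 1 := by exact_mod_cast hmeq.symm
  rw [this] at hm
  exact (Int.not_odd_iff_even.mpr hm) odd_one

lemma partial_one (n : ℕ) (hn : 1 ≤ n) : 2 * partialSum n (Hspin n n) 1 = 2 := by
  have hfil : Finset.univ.filter (fun j : Fin n => (j : ℕ) + 1 ≤ 1) = {⟨0, hn⟩} := by
    ext j
    simp only [Finset.mem_filter, Finset.mem_univ, true_and, Finset.mem_singleton,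
      Fin.ext_iff, Fin.val_mk]
    omega
  rw [partialSum, hfil, Finset.sum_singleton, hspin_top]
  norm_num

/-- The symmetric canonical elements of `SO(2n+1)` are exactly the
`ξ_I = Σ_{i∈I} H_i`, `I ⊆ {1,…,n}`; among them `H_n = E_1+⋯+E_n` is the unique one
with all coordinates odd — equivalently with `m_ξ^- = 1` and `min(m_ξ^+, m_ξ^-) = 1`,
so the unique one whose associated inner symmetric space is `ℝP^{2n}` — and its
uniton number for the standard representation is `2a_1(H_n) = 2`. -/
theorem so_odd_symmetric_canonical_projective (n : ℕ) (hn : 1 ≤ n) :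
    SymCanonSet n (IntLat n) (Hspin n) =
      {ξ | ∃ I : Finset ℕ, I ⊆ Finset.Icc 1 n ∧ ξ = ∑ i ∈ I, Hspin n i} ∧
    (∀ ξ ∈ SymCanonSet n (IntLat n) (Hspin n),
      ((∀ j : Fin n, ∃ m : ℤ, Odd m ∧ ξ j = m) ↔ ξ = Hspin n n) ∧
      ((2 * nEven n ξ + 1 = 1 ∧ min (2 * nOdd n ξ) (2 * nEven n ξ + 1) = 1) ↔
        ξ = Hspin n n)) ∧
    2 * partialSum n (Hspin n n) 1 = 2 := by
  have hset : SymCanonSet n (IntLat n) (Hspin n) =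
      {ξ | ∃ I : Finset ℕ, I ⊆ Finset.Icc 1 n ∧ ξ = ∑ i ∈ I, Hspin n i} := by
    ext ξ
    constructor
    · exact canon_sub n ξ
    · rintro ⟨I, hI, rfl⟩
      exact canon_sup n I hI
  refine ⟨hset, ?_, partial_one n hn⟩
  intro ξ hξ
  obtain ⟨I, hI, rfl⟩ : ∃ I : Finset ℕ, I ⊆ Finset.Icc 1 n ∧ ξ = ∑ i ∈ I, Hspin n i :=
    canon_sub n ξ hξ
  have ha : (∀ j : Fin n, ∃ m : ℤ, Odd m ∧ (∑ i ∈ I, Hspin n i) j = m)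
      ↔ (∑ i ∈ I, Hspin n i) = Hspin n n := by
    constructor
    · exact odd_unique n hn I hI
    · intro h j
      rw [h, hspin_top]
      exact ⟨1, odd_one, by norm_num⟩
  refine ⟨ha, ?_, ?_⟩
  · rintro ⟨h1, _⟩
    have hE : nEven n (∑ i ∈ I, Hspin n i) = 0 := by omega
    apply ha.mp
    intro j
    set Nj := (I.filter fun i => (j : ℕ) + 1 ≤ i).card with hNj
    rcases Nat.even_or_odd Nj with he | ho
    · exfalso
      have hjmem : j ∈ Finset.univ.filter
          (fun j : Fin n => ∃ m : ℤ, Even m ∧ (∑ i ∈ I, Hspin n i) j = m) :=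
        Finset.mem_filter.mpr ⟨Finset.mem_univ j,
          ⟨(Nj : ℤ), by exact_mod_cast he, by rw [coordI, hNj]; norm_cast⟩⟩
      simp only [nEven] at hE
      rw [Finset.card_eq_zero] at hE
      rw [hE] at hjmem
      exact absurd hjmem (Finset.notMem_empty j)
    · exact ⟨(Nj : ℤ), by exact_mod_cast ho, by rw [coordI, hNj]; norm_cast⟩
  · intro h
    rw [h, nEven_top, nOdd_top]
    omega
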